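/- arXiv:2605.15608 — 2 statements merged into one kernel-verified Lean document; each statement's English description precedes it below -/
import Mathlib

section
/- Let Z = (Z_1,...,Z_T) be a stochastic process taking values in a finite alphabet O = {0,1,...,m}, adapted to the filtration Z_t = σ(Z_1,...,Z_t), and let S_T be any Z_T-measurable real random variable. Then there exists an adapted ℝ^m-valued process U = (U_0,...,U_{T-1}) (U_t measurable with respect to Z_t) and a constant c ∈ ℝ such that S_T = c - ∑_{t=1}^T U_{t-1}ᵀ e(Z_t) almost surely. If P(Z_1 = z_1, ..., Z_T = z_T) > 0 for every (z_1,...,z_T) ∈ O^T, then the pair (c, U) is unique. -/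
open Finset MeasureTheory

def stdBasis (m : ℕ) (i : Fin m) : Fin m → ℝ := fun j => if j = i then 1 else 0

/-- The balanced encoding `e : {0,1,…,m} → ℝ^m`. -/
def balancedEncoding (m : ℕ) (z : Fin (m + 1)) : Fin m → ℝ :=
  if h : (z : ℕ) = 0 then -∑ i : Fin m, stdBasis m i
  else stdBasis m ⟨(z : ℕ) - 1, by omega⟩

/-- The σ-algebra generated by the observations `Z_1,…,Z_t` (i.e. `Z s` for `s < t`). -/
def obsFiltration {Ω : Type*} {m T : ℕ} (Z : Fin T → Ω → Fin (m + 1)) (t : ℕ) :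
    MeasurableSpace Ω :=
  ⨆ s : Fin T, ⨆ _ : (s : ℕ) < t, MeasurableSpace.comap (Z s) ⊤

lemma balancedEncoding_succ {m : ℕ} (j i : Fin m) :
    balancedEncoding m j.succ i = if i = j then 1 else 0 := by
  simp [balancedEncoding, stdBasis]

lemma balancedEncoding_zero {m : ℕ} (z : Fin (m+1)) (hz : (z : ℕ) = 0) (i : Fin m) :
    balancedEncoding m z i = -1 := by
  simp [balancedEncoding, hz, stdBasis, Finset.sum_apply, Finset.sum_ite_eq']

lemma sum_balancedEncoding' {m : ℕ} (i : Fin m) :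
    ∑ z : Fin (m+1), balancedEncoding m z i = 0 := by
  rw [Fin.sum_univ_succ, balancedEncoding_zero 0 rfl]
  simp [balancedEncoding_succ]

lemma constant_on_atoms {Ω : Type*} {m T : ℕ} (Z : Fin T → Ω → Fin (m + 1)) (n : ℕ)
    {β : Type*} [MeasurableSpace β] [MeasurableSingletonClass β]
    {S : Ω → β} (hS : Measurable[obsFiltration Z n] S) {ω ω' : Ω}
    (h : ∀ s : Fin T, (s : ℕ) < n → Z s ω = Z s ω') : S ω = S ω' := by
  let M : MeasurableSpace Ω :=
  { MeasurableSet' := fun A => ∀ x y : Ω, (∀ s : Fin T, (s : ℕ) < n → Z s x = Z s y) →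
      (x ∈ A ↔ y ∈ A)
    measurableSet_empty := by intro x y _; simp
    measurableSet_compl := by
      intro A hA x y hxy
      simp only [Set.mem_compl_iff]
      exact not_congr (hA x y hxy)
    measurableSet_iUnion := by
      intro f hf x y hxy
      simp only [Set.mem_iUnion]
      exact exists_congr fun i => hf i x y hxy }
  have hle : obsFiltration Z n ≤ M := by
    refine iSup_le fun s => iSup_le fun hs => ?_
    rintro A ⟨B, -, rfl⟩
    intro x y hxy
    simp only [Set.mem_preimage, hxy s hs]
  have hmeas : MeasurableSet[M] (S ⁻¹' {S ω}) :=
    hle _ (hS (measurableSet_singleton (S ω)))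
  exact ((hmeas ω ω' h).mp rfl).symm

lemma measurable_of_truncated {Ω : Type*} {m T : ℕ} (Z : Fin T → Ω → Fin (m + 1)) (n : ℕ)
    {β : Type*} [MeasurableSpace β] (G : (Fin T → Fin (m + 1)) → β) :
    Measurable[obsFiltration Z n]
      (fun ω => G (fun s => if (s : ℕ) < n then Z s ω else 0)) := by
  have hF : Measurable[obsFiltration Z n]
      (fun ω (s : Fin T) => if (s : ℕ) < n then Z s ω else 0) := by
    letI : MeasurableSpace Ω := obsFiltration Z n
    refine measurable_pi_iff.mpr fun s => ?_
    by_cases hs : (s : ℕ) < n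
    · simp only [if_pos hs]
      rw [measurable_iff_comap_le]
      refine le_trans (MeasurableSpace.comap_mono le_top) ?_
      exact le_iSup₂ (f := fun (s : Fin T) (_ : (s : ℕ) < n) => MeasurableSpace.comap (Z s) ⊤) s hs
    · simp only [if_neg hs]
      exact measurable_const
  exact (measurable_of_countable G).comp hF

noncomputable def condAvg (m T : ℕ) (g : (Fin T → Fin (m+1)) → ℝ) (n : ℕ)
    (z : Fin T → Fin (m+1)) : ℝ :=
  ((m + 1 : ℝ) ^ (T - n))⁻¹ *
    ∑ w ∈ Finset.univ.filter
      (fun w : Fin T → Fin (m+1) => ∀ s : Fin T, (s : ℕ) < n → w s = z s), g w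

lemma condAvg_top {m T : ℕ} (g : (Fin T → Fin (m+1)) → ℝ) (z : Fin T → Fin (m+1)) :
    condAvg m T g T z = g z := by
  unfold condAvg
  have h1 : Finset.univ.filter
      (fun w : Fin T → Fin (m+1) => ∀ s : Fin T, (s : ℕ) < T → w s = z s) = {z} := by
    ext w
    simp only [Finset.mem_filter, Finset.mem_univ, true_and, Finset.mem_singleton]
    constructor
    · intro hw; funext s; exact hw s s.isLt
    · intro hw s _; rw [hw]
  rw [h1]
  simp

lemma condAvg_congr {m T : ℕ} (g : (Fin T → Fin (m+1)) → ℝ) (n : ℕ)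
    {z z' : Fin T → Fin (m+1)} (h : ∀ s : Fin T, (s : ℕ) < n → z s = z' s) :
    condAvg m T g n z = condAvg m T g n z' := by
  unfold condAvg
  congr 1
  apply Finset.sum_congr _ (fun _ _ => rfl)
  apply Finset.filter_congr
  intro w _
  constructor
  · intro hw s hs; rw [hw s hs, h s hs]
  · intro hw s hs; rw [hw s hs, h s hs]

lemma filter_update {m T n : ℕ} (hn : n < T) (z : Fin T → Fin (m+1)) (o : Fin (m+1)) :
    (Finset.univ.filter
        (fun w : Fin T → Fin (m+1) => ∀ s : Fin T, (s : ℕ) < n → w s = z s)).filter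
      (fun w => w ⟨n, hn⟩ = o)
    = Finset.univ.filter (fun w : Fin T → Fin (m+1) =>
        ∀ s : Fin T, (s : ℕ) < n + 1 → w s = Function.update z ⟨n, hn⟩ o s) := by
  ext w
  simp only [Finset.mem_filter, Finset.mem_univ, true_and]
  constructor
  · rintro ⟨h1, h2⟩ s hs
    by_cases hsn : (s : ℕ) < n
    · have hne : s ≠ ⟨n, hn⟩ := by intro hc; rw [hc] at hsn; exact lt_irrefl n hsn
      rw [Function.update_of_ne hne, h1 s hsn]
    · have hs' : s = ⟨n, hn⟩ := Fin.ext (show (s : ℕ) = n by omega)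
      rw [hs', Function.update_self]
      exact hs' ▸ h2
  · intro h
    constructor
    · intro s hs
      have hne : s ≠ ⟨n, hn⟩ := by intro hc; rw [hc] at hs; exact lt_irrefl n hs
      have := h s (by omega)
      rwa [Function.update_of_ne hne] at this
    · have := h ⟨n, hn⟩ (by simp)
      rwa [Function.update_self] at this

lemma condAvg_rec {m T : ℕ} (g : (Fin T → Fin (m+1)) → ℝ) {n : ℕ} (hn : n < T)
    (z : Fin T → Fin (m+1)) :
    (m + 1 : ℝ) * condAvg m T g n z
      = ∑ o : Fin (m+1), condAvg m T g (n+1) (Function.update z ⟨n, hn⟩ o) := by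
  have hm : (m + 1 : ℝ) ≠ 0 := by positivity
  have hfib : ∑ o : Fin (m+1), ∑ w ∈ Finset.univ.filter
        (fun w : Fin T → Fin (m+1) =>
          ∀ s : Fin T, (s : ℕ) < n + 1 → w s = Function.update z ⟨n, hn⟩ o s), g w
      = ∑ w ∈ Finset.univ.filter
        (fun w : Fin T → Fin (m+1) => ∀ s : Fin T, (s : ℕ) < n → w s = z s), g w := by
    rw [← Finset.sum_fiberwise_of_maps_to (g := fun w : Fin T → Fin (m+1) => w ⟨n, hn⟩)
      (t := Finset.univ) (fun x _ => Finset.mem_univ _)]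
    exact Finset.sum_congr rfl fun o _ => by rw [filter_update hn]
  unfold condAvg
  rw [← Finset.mul_sum, hfib, ← mul_assoc]
  congr 1
  have hpow : (m + 1 : ℝ) ^ (T - n) = (m + 1 : ℝ) ^ (T - (n+1)) * (m + 1 : ℝ) := by
    rw [← pow_succ]; congr 1; omega
  rw [hpow, mul_inv]
  field_simp

lemma condAvg_step {m T : ℕ} (g : (Fin T → Fin (m+1)) → ℝ) {n : ℕ} (hn : n < T)
    (z : Fin T → Fin (m+1)) (o : Fin (m+1)) :
    condAvg m T g (n+1) (Function.update z ⟨n, hn⟩ o)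
      = condAvg m T g n z - ∑ i : Fin m,
          (condAvg m T g n z - condAvg m T g (n+1) (Function.update z ⟨n, hn⟩ i.succ))
            * balancedEncoding m o i := by
  rcases Fin.eq_zero_or_eq_succ o with ho | ⟨j, rfl⟩
  · subst ho
    have hrec := condAvg_rec g hn z
    rw [Fin.sum_univ_succ] at hrec
    have he0 : ∀ i : Fin m, balancedEncoding m (0 : Fin (m+1)) i = -1 :=
      balancedEncoding_zero 0 rfl
    simp only [he0, mul_neg_one]
    rw [Finset.sum_neg_distrib, Finset.sum_sub_distrib, Finset.sum_const, Finset.card_univ,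
      Fintype.card_fin, nsmul_eq_mul]
    linarith
  · simp only [balancedEncoding_succ, mul_ite, mul_one, mul_zero, Finset.sum_ite_eq',
      Finset.mem_univ, if_pos]
    ring

lemma condAvg_telescope {m T : ℕ} (g : (Fin T → Fin (m+1)) → ℝ) (z : Fin T → Fin (m+1)) :
    g z = condAvg m T g 0 z - ∑ t : Fin T, ∑ i : Fin m,
      (condAvg m T g (↑t) z - condAvg m T g (↑t+1) (Function.update z t i.succ))
        * balancedEncoding m (z t) i := by
  have key : ∀ t : Fin T, condAvg m T g (↑t+1) z - condAvg m T g (↑t) z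
      = -∑ i : Fin m,
          (condAvg m T g (↑t) z - condAvg m T g (↑t+1) (Function.update z t i.succ))
            * balancedEncoding m (z t) i := by
    intro t
    have h := condAvg_step g t.isLt z (z t)
    simp only [Fin.eta, Function.update_eq_self] at h
    linarith
  have h1 : ∑ t : Fin T, (condAvg m T g (↑t+1) z - condAvg m T g (↑t) z)
      = condAvg m T g T z - condAvg m T g 0 z := by
    rw [Fin.sum_univ_eq_sum_range (fun n => condAvg m T g (n+1) z - condAvg m T g n z) T]
    exact Finset.sum_range_sub (fun n => condAvg m T g n z) T
  rw [Finset.sum_congr rfl (fun t _ => key t)] at h1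
  rw [Finset.sum_neg_distrib] at h1
  rw [← condAvg_top g z]
  linarith

lemma unique_comb {m T : ℕ} (D : ℝ) (W : Fin T → (Fin T → Fin (m+1)) → Fin m → ℝ)
    (hW : ∀ (t : Fin T) (z z' : Fin T → Fin (m+1)),
      (∀ s : Fin T, (s : ℕ) < (t : ℕ) → z s = z' s) → W t z = W t z')
    (hEq : ∀ z, D = ∑ t : Fin T, ∑ i : Fin m, W t z i * balancedEncoding m (z t) i) :
    D = 0 ∧ ∀ t z, W t z = 0 := by
  classical
  set F : Fin T → (Fin T → Fin (m+1)) → ℝ :=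
    fun t y => ∑ i : Fin m, W t y i * balancedEncoding m (y t) i with hF
  have hsplit : ∀ (t0 : Fin T) (z : Fin T → Fin (m+1)) (o : Fin (m+1)),
      ∑ s ∈ Finset.univ.filter (fun t : Fin T => (t : ℕ) < (t0 : ℕ) + 1),
          F s (Function.update z t0 o)
        = (∑ s ∈ Finset.univ.filter (fun t : Fin T => (t : ℕ) < (t0 : ℕ)), F s z)
          + ∑ i : Fin m, W t0 z i * balancedEncoding m o i := by
    intro t0 z o
    have hins : Finset.univ.filter (fun t : Fin T => (t : ℕ) < (t0 : ℕ) + 1)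
        = insert t0 (Finset.univ.filter (fun t : Fin T => (t : ℕ) < (t0 : ℕ))) := by
      ext t
      simp only [Finset.mem_filter, Finset.mem_univ, true_and, Finset.mem_insert, Fin.ext_iff]
      omega
    rw [hins, Finset.sum_insert (by simp)]
    have hterm : F t0 (Function.update z t0 o)
        = ∑ i : Fin m, W t0 z i * balancedEncoding m o i := by
      have h1 : W t0 (Function.update z t0 o) = W t0 z := by
        refine hW t0 _ _ (fun s hs => ?_)
        apply Function.update_of_ne
        intro hc; rw [hc] at hs; exact lt_irrefl _ hs
      simp only [hF]
      rw [Function.update_self, h1]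
    have hrest : ∀ t ∈ Finset.univ.filter (fun t : Fin T => (t : ℕ) < (t0 : ℕ)),
        F t (Function.update z t0 o) = F t z := by
      intro t ht
      simp only [Finset.mem_filter, Finset.mem_univ, true_and] at ht
      have hne : t ≠ t0 := by intro hc; rw [hc] at ht; exact lt_irrefl _ ht
      have h1 : W t (Function.update z t0 o) = W t z := by
        refine hW t _ _ (fun s hs => ?_)
        apply Function.update_of_ne
        intro hc; rw [hc] at hs; omega
      simp only [hF]
      rw [Function.update_of_ne hne, h1]
    rw [hterm, Finset.sum_congr rfl hrest, add_comm]
  set Φ : ℕ → Prop := fun n => ∀ z, D = ∑ t ∈ Finset.univ.filter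
      (fun t : Fin T => (t : ℕ) < n), F t z with hΦdef
  have hbig : ∀ n, T ≤ n → Φ n := by
    intro n hn z
    have : Finset.univ.filter (fun t : Fin T => (t : ℕ) < n) = Finset.univ := by
      ext t; simp only [Finset.mem_filter, Finset.mem_univ, true_and, iff_true]
      exact lt_of_lt_of_le t.isLt hn
    rw [this]
    exact hEq z
  have hstep : ∀ n, Φ (n+1) → Φ n := by
    intro n hn z
    by_cases hnT : n < T
    · set t0 : Fin T := ⟨n, hnT⟩ with ht0
      have h1 : ∀ o : Fin (m+1), D
          = (∑ s ∈ Finset.univ.filter (fun t : Fin T => (t : ℕ) < n), F s z)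
            + ∑ i : Fin m, W t0 z i * balancedEncoding m o i := by
        intro o
        have := hn (Function.update z t0 o)
        rwa [hsplit t0 z o] at this
      have h2 : ∑ o : Fin (m+1), D
          = ∑ o : Fin (m+1),
            ((∑ s ∈ Finset.univ.filter (fun t : Fin T => (t : ℕ) < n), F s z)
              + ∑ i : Fin m, W t0 z i * balancedEncoding m o i) :=
        Finset.sum_congr rfl fun o _ => h1 o
      rw [Finset.sum_add_distrib] at h2
      have h3 : ∑ o : Fin (m+1), ∑ i : Fin m, W t0 z i * balancedEncoding m o i = 0 := by
        rw [Finset.sum_comm]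
        apply Finset.sum_eq_zero
        intro i _
        rw [← Finset.mul_sum, sum_balancedEncoding', mul_zero]
      rw [h3, add_zero, Finset.sum_const, Finset.sum_const, Finset.card_univ,
        Fintype.card_fin, nsmul_eq_mul, nsmul_eq_mul] at h2
      have hm' : ((m + 1 : ℕ) : ℝ) ≠ 0 := Nat.cast_ne_zero.mpr (Nat.succ_ne_zero m)
      exact mul_left_cancel₀ hm' h2
    · have : Finset.univ.filter (fun t : Fin T => (t : ℕ) < n)
          = Finset.univ.filter (fun t : Fin T => (t : ℕ) < n + 1) := by
        ext t
        simp only [Finset.mem_filter, Finset.mem_univ, true_and]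
        have := t.isLt; omega
      rw [this]
      exact hn z
  have hall : ∀ n, Φ n := by
    have hdown : ∀ j n, Φ (n + j) → Φ n := by
      intro j
      induction j with
      | zero => intro n h; exact h
      | succ k ih =>
        intro n h
        refine hstep n (ih (n+1) ?_)
        rwa [show n + 1 + k = n + (k + 1) by omega]
    intro n
    exact hdown T n (hbig (n + T) (by omega))
  have hD : D = 0 := by
    have := hall 0 (fun _ => 0)
    simpa using this
  refine ⟨hD, fun t z => ?_⟩
  funext i
  have hA := hall ((t : ℕ) + 1) (Function.update z t (i.succ))
  rw [hsplit t z i.succ] at hA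
  have hB := hall (t : ℕ) z
  have hdot : ∑ j : Fin m, W t z j * balancedEncoding m i.succ j = W t z i := by
    simp [balancedEncoding_succ, mul_ite]
  rw [hdot] at hA
  have : W t z i = 0 := by linarith
  simpa using this

/-- any `Z_T`-measurable random variable `S_T` admits an adapted
representation `S_T = c - ∑_{t=1}^T U_{t-1}ᵀ e(Z_t)` a.s.; under the positivity
condition on the law of `Z` the pair `(c, U)` is unique. -/
theorem adapted_representation_of_measurable {Ω : Type*} [MeasurableSpace Ω]
    (P : Measure Ω) [IsProbabilityMeasure P] (m T : ℕ) (hT : 1 ≤ T)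
    (Z : Fin T → Ω → Fin (m + 1)) (hZ : ∀ t, Measurable (Z t))
    (S : Ω → ℝ) (hS : Measurable[obsFiltration Z T] S) :
    (∃ (c : ℝ) (U : Fin T → Ω → Fin m → ℝ),
      (∀ t : Fin T, Measurable[obsFiltration Z (t : ℕ)] (U t)) ∧
      ∀ᵐ ω ∂P, S ω = c - ∑ t : Fin T, ∑ i : Fin m,
        U t ω i * balancedEncoding m (Z t ω) i) ∧
    ((∀ z : Fin T → Fin (m + 1), 0 < P {ω | ∀ t, Z t ω = z t}) →
      ∀ (c c' : ℝ) (U U' : Fin T → Ω → Fin m → ℝ),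
        (∀ t : Fin T, Measurable[obsFiltration Z (t : ℕ)] (U t)) →
        (∀ t : Fin T, Measurable[obsFiltration Z (t : ℕ)] (U' t)) →
        (∀ᵐ ω ∂P, S ω = c - ∑ t : Fin T, ∑ i : Fin m,
          U t ω i * balancedEncoding m (Z t ω) i) →
        (∀ᵐ ω ∂P, S ω = c' - ∑ t : Fin T, ∑ i : Fin m,
          U' t ω i * balancedEncoding m (Z t ω) i) →
        c = c' ∧ ∀ t : Fin T, U t =ᵐ[P] U' t) := by
  classical
  constructor
  · -- existence
    set g : (Fin T → Fin (m+1)) → ℝ := fun z =>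
      if h : ∃ ω, ∀ t, Z t ω = z t then S h.choose else 0 with hg
    have hgZ : ∀ ω, g (fun t => Z t ω) = S ω := by
      intro ω
      have hex : ∃ ω', ∀ t : Fin T, Z t ω' = Z t ω := ⟨ω, fun _ => rfl⟩
      have h1 : g (fun t => Z t ω) = S hex.choose := by
        simp only [hg]; rw [dif_pos hex]
      rw [h1]
      exact constant_on_atoms Z T hS (fun s _ => hex.choose_spec s)
    refine ⟨condAvg m T g 0 (fun _ => 0),
      fun t ω i => condAvg m T g (t : ℕ) (fun s => Z s ω)
        - condAvg m T g ((t : ℕ)+1) (Function.update (fun s => Z s ω) t i.succ), ?_, ?_⟩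
    · intro t
      have heq : (fun ω (i : Fin m) => condAvg m T g (t : ℕ) (fun s => Z s ω)
          - condAvg m T g ((t : ℕ)+1) (Function.update (fun s => Z s ω) t i.succ))
        = fun ω => (fun (v : Fin T → Fin (m+1)) (i : Fin m) =>
            condAvg m T g (t : ℕ) v - condAvg m T g ((t : ℕ)+1) (Function.update v t i.succ))
          (fun s => if (s : ℕ) < (t : ℕ) then Z s ω else 0) := by
        funext ω i
        have e1 : condAvg m T g (t : ℕ) (fun s => Z s ω)
            = condAvg m T g (t : ℕ) (fun s => if (s : ℕ) < (t : ℕ) then Z s ω else 0) :=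
          condAvg_congr g _ (fun s hs => (if_pos hs).symm)
        have e2 : condAvg m T g ((t : ℕ)+1) (Function.update (fun s => Z s ω) t i.succ)
            = condAvg m T g ((t : ℕ)+1)
              (Function.update (fun s => if (s : ℕ) < (t : ℕ) then Z s ω else 0) t i.succ) := by
          apply condAvg_congr
          intro s hs
          rcases eq_or_ne s t with rfl | hne
          · rw [Function.update_self, Function.update_self]
          · have hsv : (s : ℕ) ≠ (t : ℕ) := fun hc => hne (Fin.ext hc)
            rw [Function.update_of_ne hne, Function.update_of_ne hne, if_pos (by omega)]
        rw [e1, e2]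
      have hm := measurable_of_truncated Z (t : ℕ)
        (fun (v : Fin T → Fin (m+1)) (i : Fin m) =>
          condAvg m T g (t : ℕ) v - condAvg m T g ((t : ℕ)+1) (Function.update v t i.succ))
      rw [← heq] at hm
      exact hm
    · refine Filter.Eventually.of_forall (fun ω => ?_)
      have htel := condAvg_telescope g (fun s => Z s ω)
      rw [hgZ ω] at htel
      have hc0 : condAvg m T g 0 (fun _ => (0 : Fin (m+1)))
          = condAvg m T g 0 (fun s => Z s ω) :=
        condAvg_congr g 0 (fun s hs => absurd hs (by omega))
      rw [hc0]
      exact htel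
  · -- uniqueness
    intro hpos c c' U U' hU hU' h1 h2
    have hQ := h1.and h2
    have key : ∀ z : Fin T → Fin (m+1), ∃ ω, (∀ t, Z t ω = z t) ∧
        ((S ω = c - ∑ t : Fin T, ∑ i : Fin m, U t ω i * balancedEncoding m (Z t ω) i) ∧
         (S ω = c' - ∑ t : Fin T, ∑ i : Fin m, U' t ω i * balancedEncoding m (Z t ω) i)) := by
      intro z
      by_contra hcon
      have hsub : {ω | ∀ t, Z t ω = z t} ⊆
          {ω | ¬ ((S ω = c - ∑ t : Fin T, ∑ i : Fin m,
              U t ω i * balancedEncoding m (Z t ω) i) ∧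
            (S ω = c' - ∑ t : Fin T, ∑ i : Fin m,
              U' t ω i * balancedEncoding m (Z t ω) i))} := by
        intro ω hω hQω
        exact hcon ⟨ω, hω, hQω⟩
      have h0 := ae_iff.mp hQ
      have hlt := (hpos z).trans_le (measure_mono hsub)
      rw [h0] at hlt
      exact lt_irrefl 0 hlt
    choose pick hpick1 hpick2 using key
    set W : Fin T → (Fin T → Fin (m+1)) → Fin m → ℝ :=
      fun t z i => U t (pick z) i - U' t (pick z) i with hWdef
    have hWcongr : ∀ (t : Fin T) (z z' : Fin T → Fin (m+1)),
        (∀ s : Fin T, (s : ℕ) < (t : ℕ) → z s = z' s) → W t z = W t z' := by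
      intro t z z' h
      funext i
      have hagree : ∀ s : Fin T, (s : ℕ) < (t : ℕ) → Z s (pick z) = Z s (pick z') :=
        fun s hs => by rw [hpick1 z s, hpick1 z' s, h s hs]
      have ha : U t (pick z) i = U t (pick z') i :=
        @constant_on_atoms Ω m T Z (t : ℕ) ℝ _ _ (fun ω => U t ω i)
          ((measurable_pi_apply i).comp (hU t)) _ _ hagree
      have hb : U' t (pick z) i = U' t (pick z') i :=
        @constant_on_atoms Ω m T Z (t : ℕ) ℝ _ _ (fun ω => U' t ω i)
          ((measurable_pi_apply i).comp (hU' t)) _ _ hagree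
      simp only [hWdef]
      rw [ha, hb]
    have hEq : ∀ z, (c - c') = ∑ t : Fin T, ∑ i : Fin m,
        W t z i * balancedEncoding m (z t) i := by
      intro z
      obtain ⟨e1, e2⟩ := hpick2 z
      have hz : ∀ t : Fin T, Z t (pick z) = z t := hpick1 z
      simp only [hz] at e1 e2
      simp only [hWdef, sub_mul, Finset.sum_sub_distrib]
      linarith
    obtain ⟨hD, hW0⟩ := unique_comb (c - c') W hWcongr hEq
    constructor
    · linarith
    · intro t
      refine Filter.Eventually.of_forall (fun ω => ?_)
      funext i
      have e1 : U t ω i = U t (pick (fun s => Z s ω)) i :=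
        @constant_on_atoms Ω m T Z (t : ℕ) ℝ _ _ (fun ω => U t ω i)
          ((measurable_pi_apply i).comp (hU t)) _ _
          (fun s _ => (hpick1 (fun s' => Z s' ω) s).symm)
      have e2 : U' t ω i = U' t (pick (fun s => Z s ω)) i :=
        @constant_on_atoms Ω m T Z (t : ℕ) ℝ _ _ (fun ω => U' t ω i)
          ((measurable_pi_apply i).comp (hU' t)) _ _
          (fun s _ => (hpick1 (fun s' => Z s' ω) s).symm)
      have e3 := congrFun (hW0 t (fun s => Z s ω)) i
      simp only [hWdef, Pi.zero_apply] at e3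
      rw [e1, e2]
      linarith
end

section
/- Let C ∈ ℝ^{d×(m+1)} be a row-stochastic matrix over alphabet O = {0,...,m}, and for x ∈ S define c(x) ∈ ℝ^m by c(x)_i = C(x,i) - C(x,0), and the matrix R(x) := diag(c(x)) + C(x,0)(I + 𝟙𝟙ᵀ) - c(x)c(x)ᵀ, where 𝟙 ∈ ℝ^m is the all-ones vector. Then R(x) equals the covariance matrix of the random vector e(Z) where Z has distribution C(x,·) on O and e is the balanced encoding; in particular R(x) is symmetric positive semidefinite for every x. -/
open Finset Matrix

theorem Finset.sum_mul_sub_sum_mul_sub {ι R : Type*} [CommRing R] (s : Finset ι) {p : ι → R}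
    (hp : ∑ z ∈ s, p z = 1) (a b : ι → R) :
    ∑ z ∈ s, p z * ((a z - ∑ y ∈ s, p y * a y) * (b z - ∑ y ∈ s, p y * b y)) =
      ∑ z ∈ s, p z * (a z * b z) - (∑ z ∈ s, p z * a z) * ∑ z ∈ s, p z * b z := by
  have expand : ∀ z, p z * ((a z - ∑ y ∈ s, p y * a y) * (b z - ∑ y ∈ s, p y * b y)) =
      p z * (a z * b z) - p z * a z * ∑ y ∈ s, p y * b y - p z * b z * ∑ y ∈ s, p y * a y
        + p z * ((∑ y ∈ s, p y * a y) * ∑ y ∈ s, p y * b y) := fun z => by ring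
  simp only [expand, sum_add_distrib, sum_sub_distrib, ← sum_mul, hp]
  ring

theorem Matrix.sum_smul_vecMulVec_sub_mean {ι n R : Type*} [Fintype ι] [CommRing R]
    {p : ι → R} (hp : ∑ z, p z = 1) (w : ι → n → R) :
    ∑ z, p z • vecMulVec (w z - ∑ y, p y • w y) (w z - ∑ y, p y • w y) =
      ∑ z, p z • vecMulVec (w z) (w z) - vecMulVec (∑ z, p z • w z) (∑ z, p z • w z) := by
  ext i j
  simpa [sum_apply, vecMulVec_apply] using
    sum_mul_sub_sum_mul_sub univ hp (fun z => w z i) (fun z => w z j)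

theorem Matrix.posSemidef_sum_smul_vecMulVec {ι n : Type*} [Fintype ι] [Fintype n]
    {p : ι → ℝ} (hp : ∀ z, 0 ≤ p z) (w : ι → n → ℝ) :
    (∑ z, p z • vecMulVec (w z) (w z)).PosSemidef :=
  posSemidef_sum _ fun z _ => by
    simpa using (posSemidef_vecMulVec_self_star (w z)).smul (hp z)

theorem balancedEncoding_zero_s13 (m : ℕ) : balancedEncoding m 0 = fun _ => -1 := by
  ext i
  simp [balancedEncoding, _root_.stdBasis]

theorem balancedEncoding_succ_s13 (m : ℕ) (k : Fin m) : balancedEncoding m k.succ = Pi.single k 1 := by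
  ext i
  simp [balancedEncoding, _root_.stdBasis, Pi.single_apply]

theorem sum_smul_balancedEncoding {m : ℕ} (p : Fin (m + 1) → ℝ) :
    ∑ z, p z • balancedEncoding m z = fun i => p i.succ - p 0 := by
  ext i
  simp only [Finset.sum_apply, Pi.smul_apply, smul_eq_mul, Fin.sum_univ_succ, balancedEncoding_zero_s13,
    balancedEncoding_succ_s13, Pi.single_apply, mul_ite, mul_one, mul_zero, sum_ite_eq, mem_univ,
    if_true]
  ring

theorem sum_smul_vecMulVec_balancedEncoding {m : ℕ} (p : Fin (m + 1) → ℝ) :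
    ∑ z, p z • vecMulVec (balancedEncoding m z) (balancedEncoding m z) =
      diagonal (fun i => p i.succ) + p 0 • vecMulVec (fun _ => 1) (fun _ => 1) := by
  ext i j
  simp only [Matrix.sum_apply, Matrix.smul_apply, vecMulVec_apply, smul_eq_mul, Fin.sum_univ_succ,
    balancedEncoding_zero_s13, balancedEncoding_succ_s13, Matrix.add_apply, diagonal_apply]
  rcases eq_or_ne i j with rfl | hij
  · simp only [Pi.single_apply, mul_ite, mul_one, mul_zero, sum_ite_eq, mem_univ, if_true]
    ring
  · simp [Pi.single_apply, hij]

section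

variable (d m : ℕ) (Cmat : Fin d → Fin (m + 1) → ℝ)

/-- `c(x) ∈ ℝ^m`, `c(x)_i = C(x,i) - C(x,0)`. -/
def cvec (x : Fin d) : Fin m → ℝ := fun i => Cmat x i.succ - Cmat x 0

/-- `R(x) = diag(c(x)) + C(x,0)(I + 𝟙𝟙ᵀ) - c(x)c(x)ᵀ`. -/
noncomputable def Rmat (x : Fin d) : Matrix (Fin m) (Fin m) ℝ :=
  Matrix.diagonal (cvec d m Cmat x) +
    Cmat x 0 • ((1 : Matrix (Fin m) (Fin m) ℝ) +
      vecMulVec (fun _ => (1 : ℝ)) (fun _ => (1 : ℝ))) -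
    vecMulVec (cvec d m Cmat x) (cvec d m Cmat x)

theorem Rmat_eq_sum_smul_vecMulVec_sub (x : Fin d) :
    Rmat d m Cmat x =
      (∑ z, Cmat x z • vecMulVec (balancedEncoding m z) (balancedEncoding m z)) -
        vecMulVec (∑ z, Cmat x z • balancedEncoding m z)
          (∑ z, Cmat x z • balancedEncoding m z) := by
  rw [sum_smul_vecMulVec_balancedEncoding, sum_smul_balancedEncoding, Rmat]
  congr 1
  ext i j
  simp only [Matrix.add_apply, Matrix.smul_apply, diagonal_apply, one_apply, cvec, smul_eq_mul]
  split_ifs <;> ring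

/-- `R(x)` is the covariance matrix of `e(Z)` for `Z ~ C(x,·)`;
in particular it is symmetric positive semidefinite. -/
theorem Rmat_eq_covariance
    (hC_nonneg : ∀ x z, 0 ≤ Cmat x z) (hC_row : ∀ x, ∑ z, Cmat x z = 1)
    (x : Fin d) :
    Rmat d m Cmat x =
      (∑ z, Cmat x z • vecMulVec (balancedEncoding m z) (balancedEncoding m z)) -
        vecMulVec (∑ z, Cmat x z • balancedEncoding m z)
          (∑ z, Cmat x z • balancedEncoding m z) ∧
      (Rmat d m Cmat x).PosSemidef := by
  refine ⟨Rmat_eq_sum_smul_vecMulVec_sub d m Cmat x, ?_⟩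
  rw [Rmat_eq_sum_smul_vecMulVec_sub, ← sum_smul_vecMulVec_sub_mean (hC_row x)]
  exact posSemidef_sum_smul_vecMulVec (hC_nonneg x) _

end
end
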